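/- Let b ∈ ℝ, Φ as in the canonical hypotheses, and f, g: (0,∞) → (0,∞) differentiable, positive and increasing with f/g non-increasing. Then x ↦ E_{b,f(x)}[Φ(η)²] / g(x) is non-increasing. -/

import Mathlib

/-!
Put `M(s) = E[Φ(sZ + b)²]` for a standard normal `Z`, so that `E_{b,σ}[Φ²] = M(√σ)`.
Differentiating under the integral, `s M'(s) = E[(sZ + b) · 2ΦΦ'(sZ + b)] - 2b E_{b,s²}[ΦΦ']`.
The first term is at most `2 M(s)` because `x Φ'(x) ≤ Φ(x)` on `[0, ∞)` by concavity; the second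
is nonnegative because `ΦΦ'` is odd with the sign of its argument, while `N(b, s²)` puts more mass
on the side of `b`. Hence `M(s)/s²` is non-increasing, i.e. so is `σ ↦ E_{b,σ}[Φ²]/σ`; composing
with the increasing `f` and multiplying by the nonnegative non-increasing `f/g` gives the claim.
-/

open MeasureTheory ProbabilityTheory Real Set
open scoped NNReal

/-- Gaussian expectation with mean `b` and variance `σ`. -/
noncomputable def gE (b σ : ℝ) (f : ℝ → ℝ) : ℝ :=
  ∫ x, f x ∂(gaussianReal b σ.toNNReal)

theorem Function.Odd.deriv_even {Φ : ℝ → ℝ} (hΦ : Φ.Odd) : (deriv Φ).Even := fun x => by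
  have h := deriv_comp_neg Φ x
  rw [show (fun x => Φ (-x)) = -Φ from funext hΦ, deriv.neg] at h
  linarith

/-- The paper's canonical hypotheses on `Φ`. -/
structure IsSigmoidal (Φ : ℝ → ℝ) : Prop where
  contDiff : ContDiff ℝ 2 Φ
  strictMono : StrictMono Φ
  odd : Φ.Odd
  mul_deriv_deriv_neg : ∀ x ≠ 0, x * deriv (deriv Φ) x < 0

namespace IsSigmoidal

variable {Φ : ℝ → ℝ}

theorem differentiable (hΦ : IsSigmoidal Φ) : Differentiable ℝ Φ :=
  hΦ.contDiff.differentiable (by norm_num)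

theorem differentiable_deriv (hΦ : IsSigmoidal Φ) : Differentiable ℝ (deriv Φ) :=
  (contDiff_succ_iff_deriv.1 hΦ.contDiff).2.2.differentiable one_ne_zero

theorem deriv_nonneg (hΦ : IsSigmoidal Φ) (x : ℝ) : 0 ≤ deriv Φ x :=
  hΦ.strictMono.monotone.deriv_nonneg

theorem apply_nonneg (hΦ : IsSigmoidal Φ) {x : ℝ} (hx : 0 ≤ x) : 0 ≤ Φ x :=
  hΦ.odd.map_zero ▸ hΦ.strictMono.monotone hx

theorem antitoneOn_deriv (hΦ : IsSigmoidal Φ) : AntitoneOn (deriv Φ) (Ici 0) := by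
  refine antitoneOn_of_deriv_nonpos (convex_Ici 0) hΦ.differentiable_deriv.continuous.continuousOn
    hΦ.differentiable_deriv.differentiableOn fun x hx => ?_
  rw [interior_Ici] at hx
  exact nonpos_of_mul_nonpos_right (hΦ.mul_deriv_deriv_neg x hx.ne').le hx

theorem abs_deriv_le (hΦ : IsSigmoidal Φ) (x : ℝ) : |deriv Φ x| ≤ deriv Φ 0 := by
  have h_abs : deriv Φ x = deriv Φ |x| := by
    rcases abs_choice x with h | h <;> rw [h]
    exact (hΦ.odd.deriv_even x).symm
  rw [abs_of_nonneg (hΦ.deriv_nonneg x), h_abs]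
  exact hΦ.antitoneOn_deriv self_mem_Ici (abs_nonneg x) (abs_nonneg x)

theorem abs_le (hΦ : IsSigmoidal Φ) (x : ℝ) : |Φ x| ≤ deriv Φ 0 * |x| := by
  simpa [hΦ.odd.map_zero] using Convex.norm_image_sub_le_of_norm_deriv_le
    (fun y _ => hΦ.differentiable y) (fun y _ => hΦ.abs_deriv_le y) convex_univ
    (mem_univ 0) (mem_univ x)

theorem mul_deriv_le (hΦ : IsSigmoidal Φ) {x : ℝ} (hx : 0 ≤ x) : x * deriv Φ x ≤ Φ x := by
  rcases hx.eq_or_lt with rfl | hx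
  · simp [hΦ.odd.map_zero]
  obtain ⟨c, hc, hslope⟩ := exists_deriv_eq_slope Φ hx hΦ.differentiable.continuous.continuousOn
    hΦ.differentiable.differentiableOn
  rw [hΦ.odd.map_zero, sub_zero, sub_zero] at hslope
  calc x * deriv Φ x ≤ x * deriv Φ c :=
        mul_le_mul_of_nonneg_left (hΦ.antitoneOn_deriv hc.1.le hx.le hc.2.le) hx.le
    _ = Φ x := by rw [hslope]; field_simp

theorem mul_mul_deriv_le_sq (hΦ : IsSigmoidal Φ) (x : ℝ) : x * (Φ x * deriv Φ x) ≤ Φ x ^ 2 := by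
  rcases le_total 0 x with hx | hx
  · nlinarith [hΦ.mul_deriv_le hx, hΦ.apply_nonneg hx]
  · have h := hΦ.mul_deriv_le (neg_nonneg.2 hx)
    have h' := hΦ.apply_nonneg (neg_nonneg.2 hx)
    rw [hΦ.odd.deriv_even, hΦ.odd] at h
    rw [hΦ.odd] at h'
    nlinarith

theorem sq_le (hΦ : IsSigmoidal Φ) (x : ℝ) : Φ x ^ 2 ≤ deriv Φ 0 ^ 2 * x ^ 2 := by
  rw [← sq_abs, ← sq_abs x, ← mul_pow]
  exact pow_le_pow_left₀ (abs_nonneg _) (hΦ.abs_le x) 2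

theorem abs_mul_deriv_le (hΦ : IsSigmoidal Φ) (x : ℝ) :
    |Φ x * deriv Φ x| ≤ deriv Φ 0 ^ 2 * |x| := by
  rw [abs_mul]
  calc |Φ x| * |deriv Φ x| ≤ deriv Φ 0 * |x| * deriv Φ 0 :=
        mul_le_mul (hΦ.abs_le x) (hΦ.abs_deriv_le x) (abs_nonneg _)
          (mul_nonneg (hΦ.deriv_nonneg 0) (abs_nonneg x))
    _ = deriv Φ 0 ^ 2 * |x| := by ring

theorem mul_apply_nonneg (hΦ : IsSigmoidal Φ) (x : ℝ) : 0 ≤ x * Φ x := by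
  rcases le_total 0 x with hx | hx
  · exact mul_nonneg hx (hΦ.apply_nonneg hx)
  · refine mul_nonneg_of_nonpos_of_nonpos hx ?_
    simpa [hΦ.odd.map_zero] using hΦ.strictMono.monotone hx

end IsSigmoidal

theorem abs_le_one_add_sq (x : ℝ) : |x| ≤ 1 + x ^ 2 := by
  nlinarith [sq_abs x, sq_nonneg (|x| - 1)]

theorem integrable_one_add_sq_gaussianReal (μ : ℝ) (v : ℝ≥0) :
    Integrable (fun u => 1 + u ^ 2) (gaussianReal μ v) :=
  (integrable_const 1).add (memLp_id_gaussianReal (μ := μ) (v := v) 2).integrable_sq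

theorem integrable_gaussianReal_of_abs_le {μ : ℝ} {v : ℝ≥0} {h : ℝ → ℝ}
    (hh : AEStronglyMeasurable h (gaussianReal μ v)) (C : ℝ) (hC : ∀ u, |h u| ≤ C * (1 + u ^ 2)) :
    Integrable h (gaussianReal μ v) :=
  ((integrable_one_add_sq_gaussianReal μ v).const_mul C).mono' hh (ae_of_all _ hC)

theorem gaussianReal_map_mul_add {s : ℝ} {v : ℝ≥0} (hv : (v : ℝ) = s ^ 2) (b : ℝ) :
    (gaussianReal 0 1).map (fun z => s * z + b) = gaussianReal b v := by
  have h_scale : (gaussianReal 0 1).map (s * ·) = gaussianReal 0 v := by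
    rw [gaussianReal_map_const_mul, mul_zero, mul_one]
    congr
    exact hv.symm
  rw [show (fun z => s * z + b) = (· + b) ∘ (s * ·) from rfl,
    ← Measure.map_map (measurable_add_const b) (measurable_const_mul s), h_scale,
    gaussianReal_map_add_const, zero_add]

theorem integral_gaussianReal_eq_integral_mul_add {s : ℝ} {v : ℝ≥0} (hv : (v : ℝ) = s ^ 2)
    (b : ℝ) {h : ℝ → ℝ} (hh : Continuous h) :
    ∫ u, h u ∂gaussianReal b v = ∫ z, h (s * z + b) ∂gaussianReal 0 1 := by
  rw [← gaussianReal_map_mul_add hv b, integral_map (by fun_prop) hh.aestronglyMeasurable]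

theorem gaussianPDFReal_sub_neg_mul_nonneg (b : ℝ) (v : ℝ≥0) (u : ℝ) :
    0 ≤ (gaussianPDFReal b v u - gaussianPDFReal b v (-u)) * (b * u) := by
  set A := -(u - b) ^ 2 / (2 * v)
  set B := -(-u - b) ^ 2 / (2 * v)
  have h_diff : gaussianPDFReal b v u - gaussianPDFReal b v (-u) =
      (√(2 * π * v))⁻¹ * (exp A - exp B) := by
    simp only [gaussianPDFReal, A, B]; ring
  have hAB : A - B = 2 * (b * u) / v := by simp only [A, B]; ring
  rw [h_diff]
  rcases le_total 0 (b * u) with hbu | hbu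
  · have : exp B ≤ exp A := exp_le_exp.2 (sub_nonneg.1 (hAB ▸ by positivity))
    exact mul_nonneg (mul_nonneg (by positivity) (sub_nonneg.2 this)) hbu
  · have : exp A ≤ exp B :=
      exp_le_exp.2 (sub_nonpos.1 (hAB ▸ div_nonpos_of_nonpos_of_nonneg (by linarith) v.2))
    exact mul_nonneg_of_nonpos_of_nonpos
      (mul_nonpos_of_nonneg_of_nonpos (by positivity) (sub_nonpos.2 this)) hbu

/-- Symmetrizing, `2 b E[q] = ∫ b q(u) (p(u) - p(-u)) du`, whose integrand is nonnegative because
the density satisfies `p(u) ≥ p(-u)` exactly when `b u ≥ 0`. -/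
theorem mul_integral_gaussianReal_nonneg {q : ℝ → ℝ} (hodd : q.Odd) (hq : ∀ u, 0 ≤ u * q u)
    (b : ℝ) (v : ℝ≥0) : 0 ≤ b * ∫ u, q u ∂gaussianReal b v := by
  rcases eq_or_ne v 0 with rfl | hv
  · simpa [gaussianReal_zero_var] using hq b
  set p := gaussianPDFReal b v
  have h_pointwise : ∀ u, 0 ≤ b * q u * (p u - p (-u)) := by
    intro u
    rcases eq_or_ne u 0 with rfl | hu
    · simp [hodd.map_zero]
    refine nonneg_of_mul_nonneg_left ?_ (pow_pos (abs_pos.2 hu) 2)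
    calc 0 ≤ u * q u * ((p u - p (-u)) * (b * u)) :=
          mul_nonneg (hq u) (gaussianPDFReal_sub_neg_mul_nonneg b v u)
      _ = b * q u * (p u - p (-u)) * |u| ^ 2 := by rw [sq_abs]; ring
  rw [integral_gaussianReal_eq_integral_smul hv]
  simp only [smul_eq_mul]
  by_cases hg : Integrable fun u => p u * q u
  · have h_sym : 2 * (b * ∫ u, p u * q u) = ∫ u, b * q u * (p u - p (-u)) := by
      calc 2 * (b * ∫ u, p u * q u)
          = b * ((∫ u, p u * q u) + ∫ u, p (-u) * q (-u)) := by
            rw [integral_neg_eq_self (fun u => p u * q u)]; ring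
        _ = ∫ u, b * q u * (p u - p (-u)) := by
            rw [← integral_add hg hg.comp_neg, ← integral_const_mul]
            congr 1 with u
            rw [hodd u]; ring
    have h_nonneg : 0 ≤ ∫ u, b * q u * (p u - p (-u)) := integral_nonneg h_pointwise
    linarith
  · rw [integral_undef hg, mul_zero]

theorem hasDerivAt_integral_comp_mul_add {h h' : ℝ → ℝ} (hh : ∀ x, HasDerivAt h (h' x) x)
    (hh' : Continuous h') {C : ℝ} (hC : ∀ x, |h' x| ≤ C * (1 + |x|)) {b s : ℝ}
    (hint : Integrable (fun z => h (s * z + b)) (gaussianReal 0 1)) :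
    HasDerivAt (fun t => ∫ z, h (t * z + b) ∂gaussianReal 0 1)
      (∫ z, z * h' (s * z + b) ∂gaussianReal 0 1) s := by
  have hcont : Continuous h := continuous_iff_continuousAt.2 fun x => (hh x).continuousAt
  have hC0 : 0 ≤ C := by simpa using (abs_nonneg _).trans (hC 0)
  refine (hasDerivAt_integral_of_dominated_loc_of_deriv_le
    (F := fun t z => h (t * z + b)) (F' := fun t z => z * h' (t * z + b))
    (Metric.ball_mem_nhds s one_pos)
    (Filter.Eventually.of_forall fun t => (by fun_prop : Continuous fun z => h (t * z + b))
      |>.aestronglyMeasurable) hint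
    (by fun_prop : Continuous fun z => z * h' (s * z + b)).aestronglyMeasurable
    (ae_of_all _ fun z t ht => ?_)
    ((integrable_one_add_sq_gaussianReal 0 1).const_mul (C * (2 + |s| + |b|)))
    (ae_of_all _ fun z t _ => ?_)).2
  · have ht : |t| ≤ |s| + 1 := by
      have := abs_sub_abs_le_abs_sub t s
      rw [Metric.mem_ball, Real.dist_eq] at ht
      linarith
    have hlin : |t * z + b| ≤ |t| * |z| + |b| := (abs_add_le _ _).trans_eq (by rw [abs_mul])
    rw [norm_mul, Real.norm_eq_abs]
    calc |z| * |h' (t * z + b)| ≤ |z| * (C * (1 + (|t| * |z| + |b|))) := by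
          gcongr; exact (hC _).trans (by gcongr)
      _ = C * (|z| * (1 + |b|) + |t| * |z| ^ 2) := by ring
      _ ≤ C * ((1 + z ^ 2) * (1 + |b|) + (|s| + 1) * (1 + z ^ 2)) := by
          rw [sq_abs]; gcongr
          · exact abs_le_one_add_sq z
          · linarith
      _ = C * (2 + |s| + |b|) * (1 + z ^ 2) := by ring
  · simpa only [Function.comp_def, mul_comm (h' _) z] using
      (hh (t * z + b)).comp t ((hasDerivAt_mul_const z).add_const b)

theorem antitoneOn_div_pow_of_mul_deriv_le {M M' : ℝ → ℝ} {n : ℕ}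
    (hM : ∀ s ∈ Ioi (0 : ℝ), HasDerivAt M (M' s) s) (hle : ∀ s ∈ Ioi (0 : ℝ), s * M' s ≤ n * M s) :
    AntitoneOn (fun s => M s / s ^ n) (Ioi 0) := by
  have hderiv : ∀ s ∈ Ioi (0 : ℝ), HasDerivAt (fun s => M s / s ^ n)
      ((M' s * s ^ n - M s * (n * s ^ (n - 1))) / (s ^ n) ^ 2) s :=
    fun s hs => (hM s hs).div (hasDerivAt_pow n s) (pow_ne_zero _ (ne_of_gt hs))
  have hdiff : DifferentiableOn ℝ (fun s => M s / s ^ n) (Ioi 0) :=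
    fun s hs => (hderiv s hs).differentiableAt.differentiableWithinAt
  refine antitoneOn_of_deriv_nonpos (convex_Ioi 0) hdiff.continuousOn (by rwa [interior_Ioi]) ?_
  rw [interior_Ioi]
  intro s hs
  rw [(hderiv s hs).deriv]
  refine div_nonpos_of_nonpos_of_nonneg (nonpos_of_mul_nonpos_right ?_ hs) (sq_nonneg _)
  have h_factor : s * (M' s * s ^ n - M s * (n * s ^ (n - 1))) = s ^ n * (s * M' s - n * M s) := by
    rcases n with _ | n
    · simp
    · simp only [Nat.add_sub_cancel, pow_succ]; push_cast; ring
  rw [h_factor]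
  exact mul_nonpos_of_nonneg_of_nonpos (pow_nonneg (le_of_lt hs) n) (sub_nonpos.2 (hle s hs))

namespace IsSigmoidal

variable {Φ : ℝ → ℝ}

theorem mul_integral_mul_deriv_le (hΦ : IsSigmoidal Φ) (b s : ℝ) :
    s * ∫ z, z * (2 * Φ (s * z + b) * deriv Φ (s * z + b)) ∂gaussianReal 0 1 ≤
      2 * gE b (s ^ 2) (fun u => Φ u ^ 2) := by
  set v := (s ^ 2).toNNReal
  have hv : (v : ℝ) = s ^ 2 := Real.coe_toNNReal _ (sq_nonneg s)
  have hcont : Continuous Φ := hΦ.differentiable.continuous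
  have hcont' : Continuous (deriv Φ) := hΦ.differentiable_deriv.continuous
  set K := deriv Φ 0
  have hint_q : Integrable (fun u => Φ u * deriv Φ u) (gaussianReal b v) :=
    integrable_gaussianReal_of_abs_le (by fun_prop) (K ^ 2) fun u =>
      (hΦ.abs_mul_deriv_le u).trans (by gcongr; exact abs_le_one_add_sq u)
  have hint_uq : Integrable (fun u => u * (Φ u * deriv Φ u)) (gaussianReal b v) :=
    integrable_gaussianReal_of_abs_le (by fun_prop) (K ^ 2) fun u => by
      rw [abs_mul]
      calc |u| * |Φ u * deriv Φ u| ≤ |u| * (K ^ 2 * |u|) := by gcongr; exact hΦ.abs_mul_deriv_le u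
        _ = K ^ 2 * u ^ 2 := by rw [← sq_abs u]; ring
        _ ≤ K ^ 2 * (1 + u ^ 2) := by gcongr; linarith
  have hint_sq : Integrable (fun u => Φ u ^ 2) (gaussianReal b v) :=
    integrable_gaussianReal_of_abs_le (by fun_prop) (K ^ 2) fun u => by
      rw [abs_of_nonneg (sq_nonneg _)]
      exact (hΦ.sq_le u).trans (by gcongr; linarith)
  have h_odd : (fun u => Φ u * deriv Φ u).Odd := fun u => by
    simp only [hΦ.odd u, hΦ.odd.deriv_even u, neg_mul]
  have h_sign : ∀ u, 0 ≤ u * (Φ u * deriv Φ u) := fun u => by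
    rw [← mul_assoc]; exact mul_nonneg (hΦ.mul_apply_nonneg u) (hΦ.deriv_nonneg u)
  calc s * ∫ z, z * (2 * Φ (s * z + b) * deriv Φ (s * z + b)) ∂gaussianReal 0 1
      = ∫ u, 2 * (u * (Φ u * deriv Φ u)) - 2 * b * (Φ u * deriv Φ u) ∂gaussianReal b v := by
        rw [integral_gaussianReal_eq_integral_mul_add hv b (by fun_prop), ← integral_const_mul]
        congr 1 with z
        ring
    _ = 2 * ∫ u, u * (Φ u * deriv Φ u) ∂gaussianReal b v -
          2 * (b * ∫ u, Φ u * deriv Φ u ∂gaussianReal b v) := by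
        rw [integral_sub (hint_uq.const_mul 2) (hint_q.const_mul _), integral_const_mul,
          integral_const_mul]
        ring
    _ ≤ 2 * gE b (s ^ 2) (fun u => Φ u ^ 2) := by
        have h_main := integral_mono hint_uq hint_sq hΦ.mul_mul_deriv_le_sq
        have h_refl := mul_integral_gaussianReal_nonneg h_odd h_sign b v
        rw [gE]
        linarith

theorem antitoneOn_gE_sq_div_sq (hΦ : IsSigmoidal Φ) (b : ℝ) :
    AntitoneOn (fun s => gE b (s ^ 2) (fun u => Φ u ^ 2) / s ^ 2) (Ioi 0) := by
  have hcont : Continuous Φ := hΦ.differentiable.continuous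
  have hcont' : Continuous (deriv Φ) := hΦ.differentiable_deriv.continuous
  have h_std : ∀ t, gE b (t ^ 2) (fun u => Φ u ^ 2) = ∫ z, Φ (t * z + b) ^ 2 ∂gaussianReal 0 1 :=
    fun t => integral_gaussianReal_eq_integral_mul_add (Real.coe_toNNReal _ (sq_nonneg t)) b
      (by fun_prop)
  have h_deriv_sq : ∀ x, HasDerivAt (fun x => Φ x ^ 2) (2 * Φ x * deriv Φ x) x := fun x => by
    simpa using (hΦ.differentiable x).hasDerivAt.fun_pow 2
  have h_bound : ∀ x, |2 * Φ x * deriv Φ x| ≤ 2 * deriv Φ 0 ^ 2 * (1 + |x|) := fun x => by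
    rw [mul_assoc, abs_mul, abs_two, mul_assoc]
    gcongr
    exact (hΦ.abs_mul_deriv_le x).trans (by gcongr; linarith)
  have h_int : ∀ s, Integrable (fun z => Φ (s * z + b) ^ 2) (gaussianReal 0 1) := fun s =>
    integrable_gaussianReal_of_abs_le (by fun_prop) (deriv Φ 0 ^ 2 * (s ^ 2 + b ^ 2)) fun z => by
      rw [abs_of_nonneg (sq_nonneg _), mul_assoc]
      exact (hΦ.sq_le _).trans (by gcongr; nlinarith [sq_nonneg (s - b * z)])
  refine antitoneOn_div_pow_of_mul_deriv_le (fun s _ => ?_)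
    (fun s _ => by exact_mod_cast hΦ.mul_integral_mul_deriv_le b s)
  simp_rw [h_std]
  exact hasDerivAt_integral_comp_mul_add h_deriv_sq (by fun_prop) h_bound (h_int s)

end IsSigmoidal

theorem guerra_latala_antitone_general
    (Φ : ℝ → ℝ) (hC2 : ContDiff ℝ 2 Φ) (hmono : StrictMono Φ)
    (hodd : ∀ x, Φ (-x) = -Φ x)
    (hconc : ∀ x ≠ 0, x * deriv (deriv Φ) x < 0)
    (b : ℝ) (f g : ℝ → ℝ)
    (hfpos : ∀ x ∈ Ioi (0:ℝ), 0 < f x) (hgpos : ∀ x ∈ Ioi (0:ℝ), 0 < g x)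
    (hfmono : MonotoneOn f (Ioi 0))
    (hratio : AntitoneOn (fun x => f x / g x) (Ioi 0)) :
    AntitoneOn (fun x => gE b (f x) (fun u => Φ u ^ 2) / g x) (Ioi 0) := by
  have hΦ : IsSigmoidal Φ := ⟨hC2, hmono, hodd, hconc⟩
  have h_sqrt : MonotoneOn (fun x => √(f x)) (Ioi 0) :=
    fun x hx y hy hxy => Real.sqrt_le_sqrt (hfmono hx hy hxy)
  have h_maps : MapsTo (fun x => √(f x)) (Ioi 0) (Ioi 0) :=
    fun x hx => Real.sqrt_pos.2 (hfpos x hx)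
  have h_div_f : AntitoneOn (fun x => gE b (f x) (fun u => Φ u ^ 2) / f x) (Ioi 0) := by
    refine ((hΦ.antitoneOn_gE_sq_div_sq b).comp_MonotoneOn h_sqrt h_maps).congr fun x hx => ?_
    simp [Real.sq_sqrt (hfpos x hx).le]
  have h_factor : ∀ x ∈ Ioi (0 : ℝ), gE b (f x) (fun u => Φ u ^ 2) / g x =
      gE b (f x) (fun u => Φ u ^ 2) / f x * (f x / g x) :=
    fun x hx => by field_simp [(hfpos x hx).ne']
  intro x hx y hy hxy
  simp only [h_factor x hx, h_factor y hy]
  exact mul_le_mul (h_div_f hx hy hxy) (hratio hx hy hxy)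
    (div_nonneg (hfpos y hy).le (hgpos y hy).le)
    (div_nonneg (integral_nonneg fun u => sq_nonneg _) (hfpos x hx).le)

/-- if `f, g` are differentiable, positive and increasing on
`(0,∞)` with `f/g` non-increasing, then `x ↦ E_{b,f(x)}[Φ²]/g(x)` is
non-increasing. -/
theorem guerra_latala_antitone
    (Φ : ℝ → ℝ) (hC2 : ContDiff ℝ 2 Φ) (hmono : StrictMono Φ)
    (hodd : ∀ x, Φ (-x) = -Φ x)
    (hconc : ∀ x ≠ 0, x * deriv (deriv Φ) x < 0)
    (hint : Integrable (fun x => |Φ x|) (gaussianReal 0 1))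
    (b : ℝ) (f g : ℝ → ℝ)
    (hfpos : ∀ x ∈ Ioi (0:ℝ), 0 < f x) (hgpos : ∀ x ∈ Ioi (0:ℝ), 0 < g x)
    (hfdiff : ∀ x ∈ Ioi (0:ℝ), DifferentiableAt ℝ f x)
    (hgdiff : ∀ x ∈ Ioi (0:ℝ), DifferentiableAt ℝ g x)
    (hfmono : MonotoneOn f (Ioi 0)) (hgmono : MonotoneOn g (Ioi 0))
    (hratio : AntitoneOn (fun x => f x / g x) (Ioi 0)) :
    AntitoneOn (fun x => gE b (f x) (fun u => Φ u ^ 2) / g x) (Ioi 0) :=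
  guerra_latala_antitone_general Φ hC2 hmono hodd hconc b f g hfpos hgpos hfmono hratio
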